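/- Let μ be a Borel probability measure on [0,1]^d, T:[0,1]^d→[0,1]^d and f:[0,1]^d→[0,1]^d maps, n ≥ 1 an integer, and r_n = (r_{n,1},…,r_{n,d}) with r_{n,i} > 0 for all i. Let l_n:[0,1]^d→ℝ_{≥0} be a function such that for every z ∈ [0,1]^d: μ(R(f(z), l_n(z)·r_n)) = r_{n,1}⋯r_{n,d}, μ(R(f(z), s·r_n)) < r_{n,1}⋯r_{n,d} for all 0 ≤ s < l_n(z), and μ(R(f(z), s·r_n)) > r_{n,1}⋯r_{n,d} for all s > l_n(z). Put ξ_n(z) := l_n(z)·r_n and Ê_n := {z ∈ [0,1]^d : Tⁿz ∈ R(f(z), ξ_n(z))}. Let x₀ ∈ [0,1]^d, p > 0, r = (r₁,…,r_d) ∈ (ℝ_{≥0})^d, and t := max_{1≤i≤d}(p r_i / r_{n,i}). Then for every subset A of f⁻¹(R(f(x₀), p·r)): A ∩ Ê_n ⊆ A ∩ T^{−n} R(f(x₀), ξ_n(x₀) + 2t·r_n). Furthermore, if 2t ≤ l_n(x₀), then A ∩ T^{−n} R(f(x₀), ξ_n(x₀) − 2t·r_n) ⊆ A ∩ Ê_n.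 -/
import Mathlib


open MeasureTheory Filter Set Metric
open scoped ENNReal NNReal Topology BigOperators

noncomputable section

/-- The closed unit cube `[0,1]^d` in `ℝ^d` with the maximum norm. -/
def unitCube (d : ℕ) : Set (Fin d → ℝ) := Set.Icc 0 1

/-- The half-open unit cube `[0,1)^d`. -/
def unitCubeIco (d : ℕ) : Set (Fin d → ℝ) := Set.univ.pi fun _ => Set.Ico (0:ℝ) 1

/-- The `(d-1)`-dimensional upper Minkowski content
`M^{*(d-1)}(A) = limsup_{ε→0⁺} m_d(A(ε))/ε`. -/
def upperMinkContent (d : ℕ) (A : Set (Fin d → ℝ)) : ℝ≥0∞ :=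
  Filter.limsup (fun ε : ℝ => volume (Metric.thickening ε A) / ENNReal.ofReal ε)
    (nhdsWithin 0 (Set.Ioi 0))

/-- Piecewise expanding map on `[0,1]^d`, with explicit expansion constant `L` and
boundary Minkowski-content constant `K`. -/
def IsPiecewiseExpandingWith (d : ℕ) (T : (Fin d → ℝ) → (Fin d → ℝ)) (L K : ℝ) : Prop :=
  Set.MapsTo T (unitCube d) (unitCube d) ∧ 1 < L ∧ 0 < K ∧
  ∃ (Q : ℕ) (U : Fin Q → Set (Fin d → ℝ)),
    (∀ i, (U i).Nonempty) ∧ (∀ i, IsOpen (U i)) ∧ (∀ i, IsConnected (U i)) ∧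
    (∀ i, U i ⊆ unitCube d) ∧
    (Pairwise fun i j => Disjoint (U i) (U j)) ∧
    (⋃ i, closure (U i)) = unitCube d ∧
    Set.InjOn T (⋃ i, U i) ∧
    (∀ i, ∃ g : (Fin d → ℝ) → (Fin d → ℝ),
        ContDiffOn ℝ 1 g (closure (U i)) ∧ Set.EqOn g T (U i)) ∧
    (∀ i, ∀ x ∈ U i, L ≤ ‖fderiv ℝ T x‖) ∧
    (∀ i, upperMinkContent d (frontier (U i)) ≤ ENNReal.ofReal K)

/-- Piecewise expanding map on `[0,1]^d`. -/
def IsPiecewiseExpanding (d : ℕ) (T : (Fin d → ℝ) → (Fin d → ℝ)) : Prop :=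
  ∃ L K : ℝ, IsPiecewiseExpandingWith d T L K

/-- `μ` is exponentially mixing for `T` on the class of Borel sets whose boundaries have
bounded `(d-1)`-dimensional upper Minkowski content. -/
def ExpMixing (d : ℕ) (T : (Fin d → ℝ) → (Fin d → ℝ)) (μ : Measure (Fin d → ℝ)) : Prop :=
  ∀ C₀ : ℝ, 0 < C₀ → ∃ c : ℝ, 0 < c ∧ ∃ τ : ℝ, 0 < τ ∧
    ∀ n : ℕ, 1 ≤ n → ∀ F G : Set (Fin d → ℝ), MeasurableSet F → MeasurableSet G →
      upperMinkContent d (frontier F) ≤ ENNReal.ofReal C₀ →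
      upperMinkContent d (frontier G) ≤ ENNReal.ofReal C₀ →
      |(μ (F ∩ T^[n] ⁻¹' G)).toReal - (μ F).toReal * (μ G).toReal| ≤
        (μ G).toReal * (c * Real.exp (-τ * n))

/-- `f` is a piecewise Lipschitz vector function on `S` (w.r.t. `μ`), with constant `p`. -/
def PiecewiseLipschitz (d : ℕ) (S : Set (Fin d → ℝ)) (μ : Measure (Fin d → ℝ))
    (f : (Fin d → ℝ) → (Fin d → ℝ)) : Prop :=
  ∃ p : ℝ, 0 < p ∧ ∃ (m : ℕ) (U : Fin m → Set (Fin d → ℝ)),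
    (∀ j, MeasurableSet (U j)) ∧ μ (S \ ⋃ j, U j) = 0 ∧
    ∀ j, ∀ x ∈ U j, ∀ y ∈ U j, ‖f x - f y‖ ≤ p * ‖x - y‖

/-- Coordinate-parallel hyperrectangle `R(y,r) = ∏_i [y_i - r_i, y_i + r_i]`. -/
def hyperRect {d : ℕ} (y r : Fin d → ℝ) : Set (Fin d → ℝ) := Set.Icc (y - r) (y + r)

/-- The twisted recurrence set `R^f({r_n})` with hyperrectangle targets. -/
def twistedRect (d : ℕ) (S : Set (Fin d → ℝ)) (T f : (Fin d → ℝ) → (Fin d → ℝ))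
    (r : ℕ → Fin d → ℝ) : Set (Fin d → ℝ) :=
  {x ∈ S | ∃ᶠ n in Filter.atTop, T^[n] x ∈ hyperRect (f x) (r n)}

/-- The hyperboloid `H(y,δ) = y + {z ∈ [-1,1]^d : |z₁⋯z_d| < δ}`. -/
def hyperboloid (d : ℕ) (y : Fin d → ℝ) (δ : ℝ) : Set (Fin d → ℝ) :=
  {x | (∀ i, |x i - y i| ≤ 1) ∧ |∏ i, (x i - y i)| < δ}

/-- The twisted recurrence set `R^{f×}({δ_n})` with hyperboloid targets. -/
def twistedHyp (d : ℕ) (S : Set (Fin d → ℝ)) (T f : (Fin d → ℝ) → (Fin d → ℝ))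
    (δ : ℕ → ℝ) : Set (Fin d → ℝ) :=
  {x ∈ S | ∃ᶠ n in Filter.atTop, T^[n] x ∈ hyperboloid d (f x) (δ n)}

lemma mem_hyperRect_iff {d : ℕ} {y r x : Fin d → ℝ} :
    x ∈ hyperRect y r ↔ ∀ i, |x i - y i| ≤ r i := by
  simp only [hyperRect, Set.mem_Icc, Pi.le_def, Pi.sub_apply, Pi.add_apply, abs_le,
    ← forall_and]
  constructor <;> intro h i <;> constructor <;> linarith [(h i).1, (h i).2]

/-- Lemma 3.5: local comparison of the auxiliary sets `Ê_n` with
preimages of hyperrectangles. -/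
theorem stmt11 {d : ℕ} (hd : 0 < d)
    (T f : (Fin d → ℝ) → (Fin d → ℝ)) (μ : Measure (Fin d → ℝ))
    [IsProbabilityMeasure μ]
    (n : ℕ) (hn : 1 ≤ n)
    (rn : Fin d → ℝ) (hrn : ∀ i, 0 < rn i)
    (l : (Fin d → ℝ) → ℝ) (hl0 : ∀ z, 0 ≤ l z)
    (hleq : ∀ z, (μ (hyperRect (f z) (l z • rn))).toReal = ∏ i, rn i)
    (hllt : ∀ z, ∀ s : ℝ, 0 ≤ s → s < l z →
        (μ (hyperRect (f z) (s • rn))).toReal < ∏ i, rn i)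
    (hlgt : ∀ z, ∀ s : ℝ, l z < s →
        (∏ i, rn i) < (μ (hyperRect (f z) (s • rn))).toReal)
    (x₀ : Fin d → ℝ) (hx₀ : x₀ ∈ unitCube d)
    (p : ℝ) (hp : 0 < p) (r : Fin d → ℝ) (hr : ∀ i, 0 ≤ r i)
    (t : ℝ) (ht : t = ⨆ i, p * r i / rn i)
    (A : Set (Fin d → ℝ)) (hAcube : A ⊆ unitCube d)
    (hA : A ⊆ f ⁻¹' hyperRect (f x₀) (p • r)) :
    A ∩ {z ∈ unitCube d | T^[n] z ∈ hyperRect (f z) (l z • rn)}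
        ⊆ A ∩ T^[n] ⁻¹' hyperRect (f x₀) (l x₀ • rn + (2 * t) • rn) ∧
    (2 * t ≤ l x₀ →
      A ∩ T^[n] ⁻¹' hyperRect (f x₀) (l x₀ • rn - (2 * t) • rn)
        ⊆ A ∩ {z ∈ unitCube d | T^[n] z ∈ hyperRect (f z) (l z • rn)}) := by
  have hbdd : BddAbove (Set.range fun i => p * r i / rn i) :=
    (Set.finite_range _).bddAbove
  haveI : Nonempty (Fin d) := ⟨⟨0, hd⟩⟩
  have hti : ∀ i, p * r i ≤ t * rn i := by
    intro i
    have h1 : p * r i / rn i ≤ t := ht ▸ le_ciSup hbdd i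
    calc p * r i = p * r i / rn i * rn i := (div_mul_cancel₀ _ (hrn i).ne').symm
    _ ≤ t * rn i := mul_le_mul_of_nonneg_right h1 (hrn i).le
  have htnn : 0 ≤ t := by
    have h0 : (0:ℝ) ≤ p * r ⟨0, hd⟩ / rn ⟨0, hd⟩ := by
      have := hr ⟨0, hd⟩; have := (hrn ⟨0, hd⟩).le; positivity
    exact h0.trans (ht ▸ le_ciSup hbdd ⟨0, hd⟩)
  -- key: for z with f z close to f x₀, |l z - l x₀| ≤ t
  have hfz : ∀ z ∈ A, ∀ i, |f z i - f x₀ i| ≤ t * rn i := by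
    intro z hz i
    have := mem_hyperRect_iff.1 (hA hz) i
    simp only [Pi.smul_apply, smul_eq_mul] at this
    exact this.trans (hti i)
  have toReal_mono : ∀ {X Y : Set (Fin d → ℝ)}, X ⊆ Y →
      (μ X).toReal ≤ (μ Y).toReal := fun h =>
    ENNReal.toReal_mono (measure_ne_top μ _) (measure_mono h)
  have hsub : ∀ z ∈ A, ∀ s : ℝ, hyperRect (f x₀) (s • rn) ⊆ hyperRect (f z) ((s + t) • rn) := by
    intro z hz s x hx
    rw [mem_hyperRect_iff] at hx ⊢
    intro i
    have h1 := hx i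
    have h2 := hfz z hz i
    simp only [Pi.smul_apply, smul_eq_mul] at h1 ⊢
    have := abs_sub_le (x i) (f x₀ i) (f z i)
    rw [abs_sub_comm (f x₀ i)] at this
    calc |x i - f z i| ≤ |x i - f x₀ i| + |f z i - f x₀ i| := this
    _ ≤ s * rn i + t * rn i := add_le_add h1 h2
    _ = (s + t) * rn i := by ring
  have hsub' : ∀ z ∈ A, ∀ s : ℝ, hyperRect (f z) (s • rn) ⊆ hyperRect (f x₀) ((s + t) • rn) := by
    intro z hz s x hx
    rw [mem_hyperRect_iff] at hx ⊢
    intro i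
    have h1 := hx i
    have h2 := hfz z hz i
    simp only [Pi.smul_apply, smul_eq_mul] at h1 ⊢
    have := abs_sub_le (x i) (f z i) (f x₀ i)
    calc |x i - f x₀ i| ≤ |x i - f z i| + |f z i - f x₀ i| := this
    _ ≤ s * rn i + t * rn i := add_le_add h1 h2
    _ = (s + t) * rn i := by ring
  have hlub : ∀ z ∈ A, l z ≤ l x₀ + t := by
    intro z hz
    by_contra h
    push_neg at h
    have h1 := hllt z (l x₀ + t) (by linarith [hl0 x₀]) h
    have h2 : (μ (hyperRect (f x₀) (l x₀ • rn))).toReal ≤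
        (μ (hyperRect (f z) ((l x₀ + t) • rn))).toReal := toReal_mono (hsub z hz (l x₀))
    rw [hleq x₀] at h2
    linarith
  have hllb : ∀ z ∈ A, l x₀ - t ≤ l z := by
    intro z hz
    by_contra h
    push_neg at h
    have h1 := hllt x₀ (l z + t) (by linarith [hl0 z]) (by linarith)
    have h2 : (μ (hyperRect (f z) (l z • rn))).toReal ≤
        (μ (hyperRect (f x₀) ((l z + t) • rn))).toReal := toReal_mono (hsub' z hz (l z))
    rw [hleq z] at h2
    linarith
  constructor
  · rintro z ⟨hzA, -, hzE⟩
    refine ⟨hzA, ?_⟩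
    rw [Set.mem_preimage, mem_hyperRect_iff]
    intro i
    have h1 := mem_hyperRect_iff.1 hzE i
    have h2 := hfz z hzA i
    simp only [Pi.smul_apply, smul_eq_mul] at h1 ⊢
    simp only [Pi.add_apply, Pi.smul_apply, smul_eq_mul]
    have h3 : l z * rn i ≤ (l x₀ + t) * rn i :=
      mul_le_mul_of_nonneg_right (hlub z hzA) (hrn i).le
    have htri := abs_sub_le (T^[n] z i) (f z i) (f x₀ i)
    calc |T^[n] z i - f x₀ i| ≤ |T^[n] z i - f z i| + |f z i - f x₀ i| := htri
    _ ≤ l z * rn i + t * rn i := add_le_add h1 h2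
    _ ≤ l x₀ * rn i + 2 * t * rn i := by nlinarith
  · intro h2t z hz
    obtain ⟨hzA, hzT⟩ := hz
    refine ⟨hzA, hAcube hzA, ?_⟩
    rw [Set.mem_preimage, mem_hyperRect_iff] at hzT
    rw [mem_hyperRect_iff]
    intro i
    have h1 := hzT i
    have h2 := hfz z hzA i
    simp only [Pi.sub_apply, Pi.smul_apply, smul_eq_mul] at h1
    simp only [Pi.smul_apply, smul_eq_mul]
    have h3 : (l x₀ - t) * rn i ≤ l z * rn i :=
      mul_le_mul_of_nonneg_right (hllb z hzA) (hrn i).le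
    have htri := abs_sub_le (T^[n] z i) (f x₀ i) (f z i)
    rw [abs_sub_comm (f x₀ i)] at htri
    calc |T^[n] z i - f z i| ≤ |T^[n] z i - f x₀ i| + |f z i - f x₀ i| := htri
    _ ≤ (l x₀ * rn i - 2 * t * rn i) + t * rn i := add_le_add h1 h2
    _ = (l x₀ - t) * rn i := by ring
    _ ≤ l z * rn i := h3

end
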